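/- Let d ≥ 5, let ρ, σ be density matrices on ℂ^d, and let ψ and φ be any purifications of ρ and σ respectively. Then the von Neumann entropy satisfies |S(ρ) − S(σ)| ≤ (π ln d / ln 2) · ‖ψ − φ‖₂. -/

import Mathlib

open scoped BigOperators ComplexOrder
open Matrix

/-- The eigenvalues of a Hermitian matrix, listed in increasing order
(junk value `0` for non-Hermitian matrices). -/
noncomputable def eigsInc {d : ℕ} (A : Matrix (Fin d) (Fin d) ℂ) : Fin d → ℝ :=
  @dite _ A.IsHermitian (Classical.propDecidable _)
    (fun h => h.eigenvalues ∘ Tuple.sort h.eigenvalues) (fun _ => 0)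

/-- The eigenvalues of a Hermitian matrix, listed in decreasing order. -/
noncomputable def eigsDec {d : ℕ} (A : Matrix (Fin d) (Fin d) ℂ) : Fin d → ℝ :=
  fun k => eigsInc A k.rev

/-- Ergotropy `E(ρ,H) = tr(ρH) - ∑ₖ λₖ Eₖ` with `λ` decreasing, `E` increasing. -/
noncomputable def ergotropy {d : ℕ} (ρ H : Matrix (Fin d) (Fin d) ℂ) : ℝ :=
  ((ρ * H).trace).re - ∑ k : Fin d, eigsDec ρ k * eigsInc H k

/-- Operator norm (ℓ² → ℓ²) of a matrix. -/
noncomputable def opNorm {d : ℕ} (A : Matrix (Fin d) (Fin d) ℂ) : ℝ :=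
  ‖Matrix.toEuclideanCLM (𝕜 := ℂ) A‖

/-- The positive semidefinite square root of a positive semidefinite matrix, as defined in
Mathlib (Dec 2024) under this name (removed since). -/
noncomputable def Matrix.PosSemidef.sqrt {d : ℕ} {A : Matrix (Fin d) (Fin d) ℂ}
    (hA : A.PosSemidef) : Matrix (Fin d) (Fin d) ℂ :=
  hA.1.eigenvectorUnitary.1 * diagonal ((↑) ∘ (√·) ∘ hA.1.eigenvalues) *
    (star hA.1.eigenvectorUnitary : Matrix (Fin d) (Fin d) ℂ)

/-- Trace norm `‖A‖₁ = tr √(AᴴA)`. -/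
noncomputable def traceNorm {d : ℕ} (A : Matrix (Fin d) (Fin d) ℂ) : ℝ :=
  ((Matrix.posSemidef_conjTranspose_mul_self A).sqrt.trace).re

/-- Trace distance. -/
noncomputable def traceDist {d : ℕ} (ρ σ : Matrix (Fin d) (Fin d) ℂ) : ℝ :=
  traceNorm (ρ - σ) / 2

/-- Positive semidefinite square root (junk value `0` on non-PSD matrices). -/
noncomputable def psdSqrt {d : ℕ} (A : Matrix (Fin d) (Fin d) ℂ) : Matrix (Fin d) (Fin d) ℂ :=
  @dite _ A.PosSemidef (Classical.propDecidable _) (fun h => h.sqrt) (fun _ => 0)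

/-- Uhlmann fidelity `F(ρ,σ) = (tr √(√ρ σ √ρ))²`. -/
noncomputable def fidelity {d : ℕ} (ρ σ : Matrix (Fin d) (Fin d) ℂ) : ℝ :=
  ((psdSqrt (psdSqrt ρ * σ * psdSqrt ρ)).trace).re ^ 2

/-- Bures distance. -/
noncomputable def buresDist {d : ℕ} (ρ σ : Matrix (Fin d) (Fin d) ℂ) : ℝ :=
  Real.sqrt (2 - 2 * Real.sqrt (fidelity ρ σ))

/-- Hilbert–Schmidt distance. -/
noncomputable def hsDist {d : ℕ} (ρ σ : Matrix (Fin d) (Fin d) ℂ) : ℝ :=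
  Real.sqrt ((((ρ - σ)ᴴ * (ρ - σ)).trace).re)

/-- von Neumann entropy `S(ρ) = -tr(ρ ln ρ) = -∑ᵢ λᵢ ln λᵢ`. -/
noncomputable def vnEntropy {d : ℕ} (ρ : Matrix (Fin d) (Fin d) ℂ) : ℝ :=
  -∑ i : Fin d, eigsInc ρ i * Real.log (eigsInc ρ i)

/-- `ψ ∈ ℂᵈ ⊗ ℂᵈ` is a purification of `ρ`. -/
def IsPurification {d : ℕ} (ρ : Matrix (Fin d) (Fin d) ℂ)
    (ψ : EuclideanSpace ℂ (Fin d × Fin d)) : Prop :=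
  ‖ψ‖ = 1 ∧ ∀ i j, ρ i j = ∑ k : Fin d, ψ (i, k) * (starRingEnd ℂ) (ψ (j, k))

/-- Partial trace over the second tensor factor of `|ψ⟩⟨ψ|`. -/
noncomputable def partialTrace {d : ℕ} (ψ : EuclideanSpace ℂ (Fin d × Fin d)) :
    Matrix (Fin d) (Fin d) ℂ :=
  Matrix.of fun i j => ∑ k : Fin d, ψ (i, k) * (starRingEnd ℂ) (ψ (j, k))

namespace EntLipScalar


/-- Klein's scalar inequality. -/
lemma scalar_klein {a m : ℝ} (ha : 0 ≤ a) (hm : 0 < m) :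
    a * Real.log m + a - m ≤ a * Real.log a := by
  rcases eq_or_lt_of_le ha with h | h
  · simp [← h]; positivity
  · have h1 : Real.log (m / a) ≤ m / a - 1 := Real.log_le_sub_one_of_pos (by positivity)
    rw [Real.log_div (ne_of_gt hm) (ne_of_gt h)] at h1
    have h2 : a * (Real.log m - Real.log a) ≤ a * (m / a - 1) := by
      exact mul_le_mul_of_nonneg_left h1 ha
    have h3 : a * (m / a - 1) = m - a := by field_simp
    nlinarith
/-- `log 5 ≥ 1.6`. -/
lemma log_five : (1.6 : ℝ) ≤ Real.log 5 := by
  have h : Real.exp 1.6 ≤ 5 := by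
    have h8 : Real.exp 1.6 ^ 5 = Real.exp 8 := by
      rw [← Real.exp_nat_mul]; norm_num
    have h9 : Real.exp 8 ≤ 2.7182818286 ^ 8 := by
      calc Real.exp 8 = Real.exp 1 ^ 8 := by rw [← Real.exp_nat_mul]; norm_num
        _ ≤ 2.7182818286 ^ 8 := by
            apply pow_le_pow_left₀ (Real.exp_pos 1).le Real.exp_one_lt_d9.le
    have h10 : (2.7182818286 : ℝ) ^ 8 ≤ 3125 := by norm_num
    by_contra hc
    push_neg at hc
    have h11 : (5:ℝ) ^ 5 < Real.exp 1.6 ^ 5 := by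
      apply pow_lt_pow_left₀ hc (by norm_num)
      norm_num
    rw [h8] at h11
    norm_num at h11
    linarith
  calc (1.6 : ℝ) = Real.log (Real.exp 1.6) := (Real.log_exp _).symm
    _ ≤ Real.log 5 := Real.log_le_log (Real.exp_pos _) h

/-- monotonicity of `x ↦ x (log x)²` on `[0, e⁻²]`. -/
lemma xlogsq_mono {a b : ℝ} (ha : 0 ≤ a) (hab : a ≤ b) (hb : b ≤ Real.exp (-2)) :
    a * Real.log a ^ 2 ≤ b * Real.log b ^ 2 := by
  rcases eq_or_lt_of_le ha with h | hapos
  · simp only [← h, zero_mul]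
    exact mul_nonneg (ha.trans hab) (sq_nonneg _)
  have hbpos : 0 < b := lt_of_lt_of_le hapos hab
  -- key : √a * (-log a) ≤ √b * (-log b)
  have hble : b ≤ 1 := le_trans hb (by
    rw [show (1:ℝ) = Real.exp 0 by simp]
    exact (Real.exp_le_exp.mpr (by norm_num)))
  have hlogb : Real.log b ≤ -2 := by
    calc Real.log b ≤ Real.log (Real.exp (-2)) := Real.log_le_log hbpos hb
      _ = -2 := Real.log_exp _
  set r : ℝ := Real.sqrt (a / b) with hr
  have hrpos : 0 < r := Real.sqrt_pos.mpr (by positivity)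
  have hrle : r ≤ 1 := by
    rw [hr, show (1:ℝ) = Real.sqrt 1 by simp]
    exact Real.sqrt_le_sqrt (by rw [div_le_one hbpos]; exact hab)
  have hra : Real.sqrt a = r * Real.sqrt b := by
    rw [hr, ← Real.sqrt_mul (by positivity), div_mul_cancel₀]
    exact ne_of_gt hbpos
  have hloga : Real.log a = Real.log b + 2 * Real.log r := by
    have : a = b * r ^ 2 := by
      rw [hr, Real.sq_sqrt (by positivity), mul_div_cancel₀]
      exact ne_of_gt hbpos
    rw [this, Real.log_mul (ne_of_gt hbpos) (by positivity), Real.log_pow]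
    push_cast; ring
  have hlogr : r * (-Real.log r) ≤ 1 - r := by
    have h1 : Real.log (1 / r) ≤ 1 / r - 1 := Real.log_le_sub_one_of_pos (by positivity)
    rw [Real.log_div one_ne_zero (ne_of_gt hrpos), Real.log_one] at h1
    have h2 : r * (0 - Real.log r) ≤ r * (1 / r - 1) := mul_le_mul_of_nonneg_left (by linarith) hrpos.le
    have h3 : r * (1 / r - 1) = 1 - r := by field_simp
    nlinarith
  -- key inequality on sqrt-scale
  have hkey : Real.sqrt a * (-Real.log a) ≤ Real.sqrt b * (-Real.log b) := by
    rw [hra, hloga]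
    have hsb : 0 ≤ Real.sqrt b := Real.sqrt_nonneg b
    have expand : r * Real.sqrt b * (-(Real.log b + 2 * Real.log r))
        = Real.sqrt b * (r * (-Real.log b) + 2 * (r * (-Real.log r))) := by ring
    rw [expand]
    have h2 : r * (-Real.log b) + 2 * (r * (-Real.log r))
        ≤ r * (-Real.log b) + 2 * (1 - r) := by nlinarith
    have h3 : r * (-Real.log b) + 2 * (1 - r) ≤ -Real.log b := by nlinarith
    have := le_trans h2 h3
    exact mul_le_mul_of_nonneg_left this hsb
  have ha2 : a * Real.log a ^ 2 = (Real.sqrt a * (-Real.log a)) ^ 2 := by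
    rw [mul_pow, Real.sq_sqrt ha]; ring
  have hb2 : b * Real.log b ^ 2 = (Real.sqrt b * (-Real.log b)) ^ 2 := by
    rw [mul_pow, Real.sq_sqrt hbpos.le]; ring
  rw [ha2, hb2]
  have hanonneg : 0 ≤ Real.sqrt a * (-Real.log a) := by
    apply mul_nonneg (Real.sqrt_nonneg a)
    have : a ≤ 1 := le_trans hab hble
    have := Real.log_nonpos ha this
    linarith
  nlinarith [hkey]

/-- Second moment of surprisal bound. -/
lemma V_bound {d : ℕ} (hd : 5 ≤ d) (μ : Fin d → ℝ) (h0 : ∀ i, 0 ≤ μ i) (h1 : ∀ i, μ i ≤ 1)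
    (hsum : ∑ i, μ i = 1) : ∑ i, μ i * Real.log (μ i) ^ 2 ≤ 2.84 * Real.log d ^ 2 := by
  set Ld := Real.log d with hLd
  have hd5 : (5:ℝ) ≤ (d:ℝ) := by exact_mod_cast hd
  have hLd5 : (1.6:ℝ) ≤ Ld := le_trans log_five (Real.log_le_log (by norm_num) hd5)
  set m := Real.exp (-(1.3) * Ld) with hm
  have hmpos : 0 < m := Real.exp_pos _
  have hlogm : Real.log m = -(1.3) * Ld := Real.log_exp _
  have hmle : m ≤ Real.exp (-2) := Real.exp_le_exp.mpr (by nlinarith)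
  have hdm : (d:ℝ) * m = Real.exp (-(0.3) * Ld) := by
    have hde : (d:ℝ) = Real.exp Ld := by rw [hLd, Real.exp_log]; linarith
    rw [hm, hde, ← Real.exp_add]
    congr 1
    ring
  have hdm' : (d:ℝ) * m ≤ 0.68 := by
    rw [hdm]
    have h2 : Real.exp (-(0.3) * Ld) ≤ Real.exp (-0.48) := Real.exp_le_exp.mpr (by nlinarith)
    have h148 : (1.48:ℝ) ≤ Real.exp 0.48 := by
      have := Real.add_one_le_exp (0.48 : ℝ); linarith
    have hmul : Real.exp (-0.48 : ℝ) * Real.exp (0.48 : ℝ) = 1 := by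
      rw [← Real.exp_add]; norm_num
    have h3 : Real.exp (-0.48 : ℝ) ≤ 0.68 := by
      nlinarith [Real.exp_pos (-0.48 : ℝ)]
    linarith
  have hterm : ∀ i, μ i * Real.log (μ i) ^ 2 ≤ 1.69 * Ld ^ 2 * μ i + 1.69 * Ld ^ 2 * m := by
    intro i
    have hLdsq : Real.log m ^ 2 = 1.69 * Ld ^ 2 := by rw [hlogm]; ring
    rcases le_or_gt m (μ i) with hc | hc
    · have hμpos : 0 < μ i := lt_of_lt_of_le hmpos hc
      have hlogle : Real.log m ≤ Real.log (μ i) := Real.log_le_log hmpos hc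
      have hlognp : Real.log (μ i) ≤ 0 := Real.log_nonpos (h0 i) (h1 i)
      have hsq : Real.log (μ i) ^ 2 ≤ Real.log m ^ 2 := by nlinarith
      rw [hLdsq] at hsq
      nlinarith [h0 i, sq_nonneg Ld, hmpos]
    · have := xlogsq_mono (h0 i) hc.le hmle
      rw [hLdsq] at this
      nlinarith [h0 i, sq_nonneg Ld, mul_nonneg (h0 i) (sq_nonneg (Real.log (μ i)))]
  calc ∑ i, μ i * Real.log (μ i) ^ 2
      ≤ ∑ i, (1.69 * Ld ^ 2 * μ i + 1.69 * Ld ^ 2 * m) := Finset.sum_le_sum fun i _ => hterm i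
    _ = 1.69 * Ld ^ 2 * (∑ i, μ i) + (d:ℝ) * (1.69 * Ld ^ 2 * m) := by
        rw [Finset.sum_add_distrib, ← Finset.mul_sum, Finset.sum_const, Finset.card_univ]
        simp [nsmul_eq_mul, Fintype.card_fin]
    _ = 1.69 * Ld ^ 2 + 1.69 * Ld ^ 2 * ((d:ℝ) * m) := by rw [hsum]; ring
    _ ≤ 2.84 * Ld ^ 2 := by nlinarith [sq_nonneg Ld]

/-- Shannon entropy bound `H ≤ log d`. -/
lemma H_le_log {d : ℕ} (hd : 1 ≤ d) (μ : Fin d → ℝ) (h0 : ∀ i, 0 ≤ μ i)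
    (hsum : ∑ i, μ i = 1) : -∑ i, μ i * Real.log (μ i) ≤ Real.log d := by
  have hdpos : (0:ℝ) < d := by exact_mod_cast hd
  have hterm : ∀ i, -(μ i * Real.log (μ i)) ≤ μ i * Real.log d - μ i + 1 / d := by
    intro i
    have := scalar_klein (h0 i) (show (0:ℝ) < (d:ℝ)⁻¹ by positivity)
    rw [Real.log_inv] at this
    have h1d : (1:ℝ)/d = ((d:ℝ))⁻¹ := one_div _
    nlinarith
  calc -∑ i, μ i * Real.log (μ i) = ∑ i, -(μ i * Real.log (μ i)) := by rw [← Finset.sum_neg_distrib]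
    _ ≤ ∑ i, (μ i * Real.log d - μ i + 1 / d) := Finset.sum_le_sum fun i _ => hterm i
    _ = (∑ i, μ i) * Real.log d - (∑ i, μ i) + (d:ℝ) * (1/d) := by
        rw [Finset.sum_add_distrib, Finset.sum_sub_distrib, ← Finset.sum_mul, Finset.sum_const,
          Finset.card_univ]
        simp [nsmul_eq_mul, Fintype.card_fin]
    _ = Real.log d := by rw [hsum]; field_simp; ring
/-- Shannon entropy is nonnegative. -/
lemma H_nonneg {d : ℕ} (μ : Fin d → ℝ) (h0 : ∀ i, 0 ≤ μ i) (h1 : ∀ i, μ i ≤ 1) :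
    0 ≤ -∑ i, μ i * Real.log (μ i) := by
  rw [neg_nonneg]
  exact Finset.sum_nonpos fun i _ => mul_nonpos_of_nonneg_of_nonpos (h0 i)
    (Real.log_nonpos (h0 i) (h1 i))

/-- `δ log(1/δ) ≤ 0.3355` for `δ ≤ 0.221`. -/
lemma xlog_small {δ : ℝ} (h0 : 0 < δ) (h1 : δ ≤ 0.221) : δ * (-Real.log δ) ≤ 0.3355 := by
  have hL0 : -Real.log 0.221 ≤ 1.5176 := by
    have h4 : -Real.log (0.221:ℝ) = Real.log 4 + Real.log ((250:ℝ)/221) := by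
      rw [← Real.log_mul (by norm_num) (by norm_num),
        show (4:ℝ) * (250/221) = (0.221:ℝ)⁻¹ by norm_num, Real.log_inv]
    have h5 : Real.log (4:ℝ) = 2 * Real.log 2 := by
      rw [show (4:ℝ) = 2^2 by norm_num, Real.log_pow]; push_cast; ring
    have h6 : Real.log ((250:ℝ)/221) ≤ 250/221 - 1 := Real.log_le_sub_one_of_pos (by norm_num)
    have h7 := Real.log_two_lt_d9
    rw [h4, h5] at *
    nlinarith
  have h2 : -Real.log δ ≤ -Real.log 0.221 + (0.221/δ - 1) := by
    have h3 : Real.log (0.221/δ) ≤ 0.221/δ - 1 := Real.log_le_sub_one_of_pos (by positivity)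
    rw [Real.log_div (by norm_num) (ne_of_gt h0)] at h3
    linarith
  have h8 : δ * (-Real.log δ) ≤ δ * (-Real.log 0.221 - 1) + 0.221 := by
    have := mul_le_mul_of_nonneg_left h2 h0.le
    have h9 : δ * (0.221/δ) = 0.221 := by field_simp
    nlinarith
  have h10 : 0 ≤ -Real.log 0.221 - 1 := by
    have he : (0.221:ℝ) ≤ Real.exp (-1) := by
      rw [Real.exp_neg]
      have hmul : Real.exp 1 * (Real.exp 1)⁻¹ = 1 := mul_inv_cancel₀ (ne_of_gt (Real.exp_pos 1))
      have hle := Real.exp_one_lt_d9.le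
      have hinvpos : 0 < (Real.exp 1)⁻¹ := by positivity
      nlinarith
    have hll := Real.log_le_log (by norm_num : (0:ℝ) < 0.221) he
    rw [Real.log_exp] at hll
    linarith
  nlinarith

/-- `-log(1-ε) ≤ 1.052 ε` for `ε ≤ 0.0489`. -/
lemma neg_log_one_sub {ε : ℝ} (h0 : 0 < ε) (h1 : ε ≤ 0.0489) : -Real.log (1 - ε) ≤ 1.052 * ε := by
  have hpos : 0 < 1 - ε := by linarith
  have h2 : Real.log (1-ε)⁻¹ ≤ (1-ε)⁻¹ - 1 := Real.log_le_sub_one_of_pos (by positivity)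
  rw [Real.log_inv] at h2
  have h3 : (1-ε)⁻¹ - 1 = ε / (1-ε) := by field_simp; ring
  have h4 : ε / (1-ε) ≤ 1.052 * ε := by
    rw [div_le_iff₀ hpos]
    nlinarith
  linarith


end EntLipScalar

namespace EntLip

variable {d : ℕ}



variable {d : ℕ}

lemma sum3_comm (f : Fin d → Fin d → Fin d → ℂ) :
    ∑ i, ∑ k, ∑ j, f i k j = ∑ j, ∑ k, ∑ i, f i k j :=
  calc ∑ i, ∑ k, ∑ j, f i k j = ∑ i, ∑ j, ∑ k, f i k j :=
        Finset.sum_congr rfl fun _ _ => Finset.sum_comm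
    _ = ∑ j, ∑ i, ∑ k, f i k j := Finset.sum_comm
    _ = ∑ j, ∑ k, ∑ i, f i k j := Finset.sum_congr rfl fun _ _ => Finset.sum_comm

/-- `L ⊗ I` acting on `ℂ^d ⊗ ℂ^d`. -/
noncomputable def matAct (L : Matrix (Fin d) (Fin d) ℂ)
    (χ : EuclideanSpace ℂ (Fin d × Fin d)) : EuclideanSpace ℂ (Fin d × Fin d) :=
  WithLp.toLp 2 (fun p : Fin d × Fin d => ∑ j, L p.1 j * χ (j, p.2))

lemma matAct_apply (L : Matrix (Fin d) (Fin d) ℂ) (χ : EuclideanSpace ℂ (Fin d × Fin d))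
    (i k : Fin d) : matAct L χ (i, k) = ∑ j, L i j * χ (j, k) := rfl

lemma matAct_sub (L : Matrix (Fin d) (Fin d) ℂ) (x y : EuclideanSpace ℂ (Fin d × Fin d)) :
    matAct L (x - y) = matAct L x - matAct L y := by
  ext p
  simp [matAct, PiLp.sub_apply, mul_sub, Finset.sum_sub_distrib]

lemma inner_matAct (L : Matrix (Fin d) (Fin d) ℂ) (x y : EuclideanSpace ℂ (Fin d × Fin d)) :
    (inner ℂ x (matAct L y) : ℂ) =
      ∑ i, ∑ k, ∑ j, (starRingEnd ℂ) (x (i, k)) * (L i j * y (j, k)) := by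
  simp [PiLp.inner_apply, RCLike.inner_apply, matAct, Fintype.sum_prod_type, Finset.mul_sum]
  refine Finset.sum_congr rfl fun _ _ => Finset.sum_congr rfl fun _ _ => ?_
  rw [Finset.sum_mul]; exact Finset.sum_congr rfl fun _ _ => by ring

lemma matAct_adjoint (L : Matrix (Fin d) (Fin d) ℂ) (x y : EuclideanSpace ℂ (Fin d × Fin d)) :
    (inner ℂ (matAct L x) y : ℂ) = inner ℂ x (matAct Lᴴ y) := by
  have h1 : (inner ℂ (matAct L x) y : ℂ) = (starRingEnd ℂ) (inner ℂ y (matAct L x) : ℂ) := by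
    rw [← inner_conj_symm]
  rw [h1, inner_matAct, inner_matAct, map_sum, sum3_comm]
  refine Finset.sum_congr rfl fun j _ => ?_
  rw [map_sum]
  refine Finset.sum_congr rfl fun k _ => ?_
  rw [map_sum]
  refine Finset.sum_congr rfl fun i _ => ?_
  simp only [_root_.map_mul, conjTranspose_apply, RCLike.star_def, Complex.conj_conj]
  ring

lemma matAct_matAct (L M : Matrix (Fin d) (Fin d) ℂ) (χ : EuclideanSpace ℂ (Fin d × Fin d)) :
    matAct L (matAct M χ) = matAct (L * M) χ := by
  ext p
  simp only [matAct, PiLp.toLp_apply, Matrix.mul_apply, Finset.sum_mul, Finset.mul_sum]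
  rw [Finset.sum_comm]
  exact Finset.sum_congr rfl fun l _ => Finset.sum_congr rfl fun j _ => by ring

lemma inner_matAct_self (L : Matrix (Fin d) (Fin d) ℂ) (χ : EuclideanSpace ℂ (Fin d × Fin d))
    (τ : Matrix (Fin d) (Fin d) ℂ)
    (hτ : ∀ i j, τ i j = ∑ k, χ (i, k) * (starRingEnd ℂ) (χ (j, k))) :
    (inner ℂ χ (matAct L χ) : ℂ) = (τ * L).trace := by
  rw [inner_matAct, Matrix.trace]
  have : ∀ j, (τ * L).diag j = ∑ i, (∑ k, χ (j, k) * (starRingEnd ℂ) (χ (i, k))) * L i j := by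
    intro j
    simp only [Matrix.diag, Matrix.mul_apply, hτ]
  rw [Finset.sum_congr rfl fun j _ => this j]
  rw [sum3_comm (fun i k j => (starRingEnd ℂ) (χ (i, k)) * (L i j * χ (j, k)))]
  refine Finset.sum_congr rfl fun j _ => ?_
  rw [Finset.sum_comm]
  refine Finset.sum_congr rfl fun i _ => ?_
  rw [Finset.sum_mul]
  refine Finset.sum_congr rfl fun k _ => by ring


variable {d : ℕ}

lemma trace_mul_diag (B : Matrix (Fin d) (Fin d) ℂ) (v : Fin d → ℂ) :
    (B * diagonal v).trace = ∑ j, B j j * v j := by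
  simp [Matrix.trace, Matrix.diag, Matrix.mul_diagonal]

lemma diag_mul_apply (B : Matrix (Fin d) (Fin d) ℂ) (v : Fin d → ℂ) (i : Fin d) :
    (diagonal v * B) i i = v i * B i i := by simp [Matrix.diagonal_mul]

lemma sandwich_mul {M : Matrix (Fin d) (Fin d) ℂ} (hM : Mᴴ * M = 1) (v w : Fin d → ℂ) :
    (M * diagonal v * Mᴴ) * (M * diagonal w * Mᴴ)
      = M * diagonal (fun i => v i * w i) * Mᴴ := by
  have : M * diagonal v * Mᴴ * (M * diagonal w * Mᴴ)
      = M * (diagonal v * (Mᴴ * M) * diagonal w) * Mᴴ := by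
    simp only [Matrix.mul_assoc]
  rw [this, hM, Matrix.mul_one, Matrix.diagonal_mul_diagonal]

lemma sandwich_conjTranspose (M : Matrix (Fin d) (Fin d) ℂ) (v : Fin d → ℝ) :
    (M * diagonal (fun i => (v i : ℂ)) * Mᴴ)ᴴ = M * diagonal (fun i => (v i : ℂ)) * Mᴴ := by
  simp only [Matrix.conjTranspose_mul, Matrix.conjTranspose_conjTranspose,
    Matrix.diagonal_conjTranspose]
  have : star (fun i => (v i : ℂ)) = fun i => (v i : ℂ) := by
    funext i; simp [Complex.conj_ofReal]
  rw [this, Matrix.mul_assoc]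

lemma trace_sandwich {M : Matrix (Fin d) (Fin d) ℂ} (hM : Mᴴ * M = 1) (v : Fin d → ℂ) :
    (M * diagonal v * Mᴴ).trace = ∑ j, v j := by
  rw [Matrix.trace_mul_cycle, hM, Matrix.one_mul, Matrix.trace_diagonal]

lemma trace_mul_sandwich (τ : Matrix (Fin d) (Fin d) ℂ) (M : Matrix (Fin d) (Fin d) ℂ)
    (v : Fin d → ℂ) :
    (τ * (M * diagonal v * Mᴴ)).trace = ∑ j, (Mᴴ * τ * M) j j * v j := by
  have h1 : τ * (M * diagonal v * Mᴴ) = (τ * M * diagonal v) * Mᴴ := by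
    simp only [Matrix.mul_assoc]
  rw [h1, Matrix.trace_mul_comm, ← Matrix.mul_assoc, ← Matrix.mul_assoc, trace_mul_diag]

lemma posSemidef_diag_re_nonneg {τ : Matrix (Fin d) (Fin d) ℂ} (hτ : τ.PosSemidef)
    (j : Fin d) : 0 ≤ (τ j j).re := by
  have := hτ.re_dotProduct_nonneg (Pi.single j 1)
  simpa [dotProduct, Matrix.mulVec, Pi.single_apply, Finset.sum_ite_eq,
    dotProduct_single] using this





lemma partialTrace_posSemidef (χ : EuclideanSpace ℂ (Fin d × Fin d)) :
    (partialTrace χ).PosSemidef := by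
  have h : partialTrace χ = (Matrix.of fun i k => χ (i, k)) * (Matrix.of fun i k => χ (i, k))ᴴ := by
    ext i j
    simp [partialTrace, Matrix.mul_apply, Matrix.conjTranspose_apply, RCLike.star_def]
  rw [h]
  exact Matrix.posSemidef_self_mul_conjTranspose _

lemma partialTrace_trace_re (χ : EuclideanSpace ℂ (Fin d × Fin d)) :
    (partialTrace χ).trace.re = ‖χ‖ ^ 2 := by
  have h : ‖χ‖ ^ 2 = ∑ p : Fin d × Fin d, ‖χ p‖ ^ 2 := by
    rw [EuclideanSpace.norm_eq, Real.sq_sqrt]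
    exact Finset.sum_nonneg fun p _ => sq_nonneg _
  have h2 : (partialTrace χ).trace = ∑ i, ∑ k, χ (i, k) * (starRingEnd ℂ) (χ (i, k)) := by
    simp [Matrix.trace, Matrix.diag, partialTrace]
  rw [h, h2, Fintype.sum_prod_type, Complex.re_sum]
  refine Finset.sum_congr rfl fun i _ => ?_
  rw [Complex.re_sum]
  refine Finset.sum_congr rfl fun k _ => ?_
  rw [Complex.mul_conj, Complex.ofReal_re, Complex.normSq_eq_norm_sq]


lemma inner_matAct_pt (L : Matrix (Fin d) (Fin d) ℂ) (χ : EuclideanSpace ℂ (Fin d × Fin d)) :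
    (inner ℂ χ (matAct L χ) : ℂ) = (partialTrace χ * L).trace :=
  inner_matAct_self L χ _ (fun _ _ => rfl)

lemma norm_matAct_sq (L : Matrix (Fin d) (Fin d) ℂ) (χ : EuclideanSpace ℂ (Fin d × Fin d)) :
    ‖matAct L χ‖ ^ 2 = ((partialTrace χ) * (Lᴴ * L)).trace.re := by
  have h1 : (inner ℂ (matAct L χ) (matAct L χ) : ℂ) = (partialTrace χ * (Lᴴ * L)).trace := by
    rw [matAct_adjoint, matAct_matAct, inner_matAct_pt]
  have h2 := inner_self_eq_norm_sq (𝕜 := ℂ) (x := matAct L χ)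
  rw [← h2, h1]
  rfl

lemma trace_conj_eq (τ : Matrix (Fin d) (Fin d) ℂ) {M : Matrix (Fin d) (Fin d) ℂ}
    (hM' : M * Mᴴ = 1) : (Mᴴ * τ * M).trace = τ.trace := by
  rw [Matrix.trace_mul_cycle, hM', Matrix.one_mul]

lemma norm_matAct_le {M : Matrix (Fin d) (Fin d) ℂ} (hM : Mᴴ * M = 1) (hM' : M * Mᴴ = 1)
    (v : Fin d → ℝ) {b : ℝ} (hb0 : 0 ≤ b) (hb : ∀ j, |v j| ≤ b)
    (χ : EuclideanSpace ℂ (Fin d × Fin d)) :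
    ‖matAct (M * diagonal (fun i => (v i : ℂ)) * Mᴴ) χ‖ ≤ b * ‖χ‖ := by
  set L := M * diagonal (fun i => (v i : ℂ)) * Mᴴ with hL
  have hLH : Lᴴ = L := sandwich_conjTranspose M v
  have hLL : L * L = M * diagonal (fun i => ((v i : ℂ) * (v i : ℂ))) * Mᴴ := sandwich_mul hM _ _
  have hsq : ‖matAct L χ‖ ^ 2
      = ∑ j, ((Mᴴ * partialTrace χ * M) j j * ((v j : ℂ) * (v j : ℂ))).re := by
    rw [norm_matAct_sq, hLH, hLL, trace_mul_sandwich, Complex.re_sum]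
  have hpsd := (partialTrace_posSemidef χ).conjTranspose_mul_mul_same M
  have hterm : ∀ j, ((Mᴴ * partialTrace χ * M) j j * ((v j : ℂ) * (v j : ℂ))).re
      = ((Mᴴ * partialTrace χ * M) j j).re * (v j * v j) := by
    intro j
    rw [← Complex.ofReal_mul, Complex.mul_re, Complex.ofReal_re, Complex.ofReal_im]
    ring
  have hbd : ‖matAct L χ‖ ^ 2 ≤ b ^ 2 * ‖χ‖ ^ 2 := by
    rw [hsq]
    have h1 : ∀ j, ((Mᴴ * partialTrace χ * M) j j * ((v j : ℂ) * (v j : ℂ))).re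
        ≤ b ^ 2 * ((Mᴴ * partialTrace χ * M) j j).re := by
      intro j
      rw [hterm j]
      have h2 : 0 ≤ ((Mᴴ * partialTrace χ * M) j j).re := posSemidef_diag_re_nonneg hpsd j
      have h3 : v j * v j ≤ b ^ 2 := by
        have := hb j
        nlinarith [abs_nonneg (v j), sq_abs (v j), this]
      nlinarith
    calc ∑ j, ((Mᴴ * partialTrace χ * M) j j * ((v j : ℂ) * (v j : ℂ))).re
        ≤ ∑ j, b ^ 2 * ((Mᴴ * partialTrace χ * M) j j).re :=
          Finset.sum_le_sum fun j _ => h1 j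
      _ = b ^ 2 * ((Mᴴ * partialTrace χ * M).trace).re := by
          rw [Matrix.trace, Complex.re_sum, Finset.mul_sum]
          exact Finset.sum_congr rfl fun j _ => rfl
      _ = b ^ 2 * ‖χ‖ ^ 2 := by rw [trace_conj_eq _ hM', partialTrace_trace_re]
  have hfin : ‖matAct L χ‖ ^ 2 ≤ (b * ‖χ‖) ^ 2 := by rw [mul_pow]; exact hbd
  calc ‖matAct L χ‖ = Real.sqrt (‖matAct L χ‖ ^ 2) := (Real.sqrt_sq (norm_nonneg _)).symm
    _ ≤ Real.sqrt ((b * ‖χ‖) ^ 2) := Real.sqrt_le_sqrt hfin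
    _ = b * ‖χ‖ := Real.sqrt_sq (mul_nonneg hb0 (norm_nonneg _))

lemma sandwich_double_trace_re {W M : Matrix (Fin d) (Fin d) ℂ}
    (hW : Wᴴ * W = 1) (hM' : M * Mᴴ = 1) (lam v : Fin d → ℝ) :
    (((W * diagonal (fun i => (lam i : ℂ)) * Wᴴ) * (M * diagonal (fun j => (v j : ℂ)) * Mᴴ)).trace).re
      = ∑ i, ∑ j, lam i * v j * Complex.normSq ((Wᴴ * M) i j) := by
  set Q := Wᴴ * M with hQ
  have hassoc : (W * diagonal (fun i => (lam i : ℂ)) * Wᴴ) * (M * diagonal (fun j => (v j : ℂ)) * Mᴴ)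
      = W * (diagonal (fun i => (lam i : ℂ)) * (Q * diagonal (fun j => (v j : ℂ)) * Mᴴ)) := by
    simp only [hQ, Matrix.mul_assoc]
  have hMW : Mᴴ * W = Qᴴ := by
    rw [hQ, Matrix.conjTranspose_mul, Matrix.conjTranspose_conjTranspose]
  have hassoc2 : (diagonal (fun i => (lam i : ℂ)) * (Q * diagonal (fun j => (v j : ℂ)) * Mᴴ)) * W
      = diagonal (fun i => (lam i : ℂ)) * (Q * diagonal (fun j => (v j : ℂ)) * Qᴴ) := by
    rw [← hMW]; simp only [Matrix.mul_assoc]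
  rw [hassoc, Matrix.trace_mul_comm, hassoc2, Matrix.trace, Complex.re_sum]
  refine Finset.sum_congr rfl fun i _ => ?_
  have hdiag : (diagonal (fun i => (lam i : ℂ)) * (Q * diagonal (fun j => (v j : ℂ)) * Qᴴ)).diag i
      = (lam i : ℂ) * ∑ j, Q i j * (v j : ℂ) * (starRingEnd ℂ) (Q i j) := by
    show (diagonal (fun i => (lam i : ℂ)) * (Q * diagonal (fun j => (v j : ℂ)) * Qᴴ)) i i = _
    rw [Matrix.diagonal_mul]
    congr 1
    rw [Matrix.mul_apply]
    refine Finset.sum_congr rfl fun j _ => ?_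
    rw [Matrix.mul_diagonal, Matrix.conjTranspose_apply]
    rfl
  have hsum : ∑ j, Q i j * (v j : ℂ) * (starRingEnd ℂ) (Q i j)
      = ((∑ j, v j * Complex.normSq (Q i j) : ℝ) : ℂ) := by
    push_cast
    refine Finset.sum_congr rfl fun j _ => ?_
    rw [← Complex.mul_conj]
    ring
  rw [hdiag, hsum, ← Complex.ofReal_mul, Complex.ofReal_re, Finset.mul_sum]
  exact Finset.sum_congr rfl fun j _ => by ring

lemma sandwich_double_rowsum {W M : Matrix (Fin d) (Fin d) ℂ}
    (hW : Wᴴ * W = 1) (hM' : M * Mᴴ = 1) (i : Fin d) :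
    ∑ j, Complex.normSq ((Wᴴ * M) i j) = 1 := by
  have h1 : (Wᴴ * M) * (Wᴴ * M)ᴴ = 1 := by
    rw [Matrix.conjTranspose_mul, Matrix.conjTranspose_conjTranspose]
    calc Wᴴ * M * (Mᴴ * W) = Wᴴ * (M * Mᴴ) * W := by simp only [Matrix.mul_assoc]
      _ = 1 := by rw [hM', Matrix.mul_one, hW]
  have h2 : ((Wᴴ * M) * (Wᴴ * M)ᴴ) i i = 1 := by rw [h1]; simp
  have h3 : ∑ j, (Wᴴ * M) i j * (starRingEnd ℂ) ((Wᴴ * M) i j) = 1 := by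
    rw [← h2, Matrix.mul_apply]
    exact Finset.sum_congr rfl fun j _ => by rw [Matrix.conjTranspose_apply]; rfl
  have := congrArg Complex.re h3
  rw [Complex.re_sum, Complex.one_re] at this
  rw [← this]
  exact Finset.sum_congr rfl fun j _ => by rw [Complex.mul_conj, Complex.ofReal_re]

lemma sandwich_double_colsum {W M : Matrix (Fin d) (Fin d) ℂ}
    (hW' : W * Wᴴ = 1) (hM : Mᴴ * M = 1) (j : Fin d) :
    ∑ i, Complex.normSq ((Wᴴ * M) i j) = 1 := by
  have h1 : (Wᴴ * M)ᴴ * (Wᴴ * M) = 1 := by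
    rw [Matrix.conjTranspose_mul, Matrix.conjTranspose_conjTranspose]
    calc Mᴴ * W * (Wᴴ * M) = Mᴴ * (W * Wᴴ) * M := by simp only [Matrix.mul_assoc]
      _ = 1 := by rw [hW', Matrix.mul_one, hM]
  have h2 : ((Wᴴ * M)ᴴ * (Wᴴ * M)) j j = 1 := by rw [h1]; simp
  have h3 : ∑ i, (starRingEnd ℂ) ((Wᴴ * M) i j) * (Wᴴ * M) i j = 1 := by
    rw [← h2, Matrix.mul_apply]
    exact Finset.sum_congr rfl fun i _ => by rw [Matrix.conjTranspose_apply]; rfl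
  have := congrArg Complex.re h3
  rw [Complex.re_sum, Complex.one_re] at this
  rw [← this]
  refine Finset.sum_congr rfl fun i _ => ?_
  rw [mul_comm, Complex.mul_conj, Complex.ofReal_re]



lemma entropy_eq {A : Matrix (Fin d) (Fin d) ℂ} (hA : A.IsHermitian) :
    vnEntropy A = -∑ i, hA.eigenvalues i * Real.log (hA.eigenvalues i) := by
  unfold vnEntropy eigsInc
  rw [dif_pos hA]
  congr 1
  exact Equiv.sum_comp (Tuple.sort hA.eigenvalues)
    (fun i => hA.eigenvalues i * Real.log (hA.eigenvalues i))

lemma spectral_form {A : Matrix (Fin d) (Fin d) ℂ} (hA : A.IsHermitian) :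
    A = (hA.eigenvectorUnitary : Matrix (Fin d) (Fin d) ℂ)
        * diagonal (fun i => (hA.eigenvalues i : ℂ))
        * (hA.eigenvectorUnitary : Matrix (Fin d) (Fin d) ℂ)ᴴ := by
  have h := hA.spectral_theorem
  rw [Unitary.conjStarAlgAut_apply] at h
  exact h

lemma unitary_facts {A : Matrix (Fin d) (Fin d) ℂ} (hA : A.IsHermitian) :
    ((hA.eigenvectorUnitary : Matrix (Fin d) (Fin d) ℂ))ᴴ
        * (hA.eigenvectorUnitary : Matrix (Fin d) (Fin d) ℂ) = 1 ∧
    (hA.eigenvectorUnitary : Matrix (Fin d) (Fin d) ℂ)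
        * (hA.eigenvectorUnitary : Matrix (Fin d) (Fin d) ℂ)ᴴ = 1 := by
  constructor
  · rw [← Matrix.star_eq_conjTranspose]
    exact (Matrix.mem_unitaryGroup_iff').mp hA.eigenvectorUnitary.2
  · rw [← Matrix.star_eq_conjTranspose]
    exact (Matrix.mem_unitaryGroup_iff).mp hA.eigenvectorUnitary.2

lemma eigenvalues_sum_one {A : Matrix (Fin d) (Fin d) ℂ} (hA : A.IsHermitian)
    (hA1 : A.trace = 1) : ∑ i, hA.eigenvalues i = 1 := by
  have h1 : A.trace = ∑ i, (hA.eigenvalues i : ℂ) := by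
    conv_lhs => rw [spectral_form hA]
    exact trace_sandwich (unitary_facts hA).1 _
  rw [hA1] at h1
  have := congrArg Complex.re h1.symm
  rw [Complex.re_sum, Complex.one_re] at this
  rw [← this]
  exact Finset.sum_congr rfl fun i _ => (Complex.ofReal_re _).symm


lemma klein_bound {ρ : Matrix (Fin d) (Fin d) ℂ} (hρ : ρ.PosSemidef) (hρ1 : ρ.trace = 1)
    {M : Matrix (Fin d) (Fin d) ℂ} (hM : Mᴴ * M = 1) (hM' : M * Mᴴ = 1)
    {μ' : Fin d → ℝ} (hpos : ∀ j, 0 < μ' j) (hsum' : ∑ j, μ' j = 1) :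
    vnEntropy ρ ≤
      -((ρ * (M * diagonal (fun j => ((Real.log (μ' j) : ℝ) : ℂ)) * Mᴴ)).trace).re := by
  obtain ⟨hW, hW'⟩ := unitary_facts hρ.1
  set W := (hρ.1.eigenvectorUnitary : Matrix (Fin d) (Fin d) ℂ) with hW0
  set lam := hρ.1.eigenvalues with hlam
  have hlam0 : ∀ i, 0 ≤ lam i := hρ.eigenvalues_nonneg
  have hlamsum : ∑ i, lam i = 1 := eigenvalues_sum_one hρ.1 hρ1
  set ν := fun j => Real.log (μ' j) with hν
  set w := fun (i j : Fin d) => Complex.normSq ((Wᴴ * M) i j) with hw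
  have hw0 : ∀ i j, 0 ≤ w i j := fun i j => Complex.normSq_nonneg _
  have htr : ((ρ * (M * diagonal (fun j => (ν j : ℂ)) * Mᴴ)).trace).re
      = ∑ i, ∑ j, lam i * ν j * w i j := by
    conv_lhs => rw [spectral_form hρ.1]
    exact sandwich_double_trace_re hW hM' lam ν
  have hrow : ∀ i, ∑ j, w i j = 1 := fun i => sandwich_double_rowsum hW hM' i
  have hcol : ∀ j, ∑ i, w i j = 1 := fun j => sandwich_double_colsum hW' hM j
  rw [entropy_eq hρ.1, htr, neg_le_neg_iff]
  have hstep : ∀ i, ∑ j, lam i * ν j * w i j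
      ≤ (lam i * Real.log (lam i) - lam i) + ∑ j, w i j * μ' j := by
    intro i
    have h1 : ∀ j, lam i * ν j * w i j
        ≤ (lam i * Real.log (lam i) - lam i) * w i j + w i j * μ' j := by
      intro j
      have hk := EntLipScalar.scalar_klein (hlam0 i) (hpos j)
      nlinarith [mul_le_mul_of_nonneg_right hk (hw0 i j)]
    calc ∑ j, lam i * ν j * w i j
        ≤ ∑ j, ((lam i * Real.log (lam i) - lam i) * w i j + w i j * μ' j) :=
          Finset.sum_le_sum fun j _ => h1 j
      _ = (lam i * Real.log (lam i) - lam i) * (∑ j, w i j) + ∑ j, w i j * μ' j := by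
          rw [Finset.sum_add_distrib, Finset.mul_sum]
      _ = (lam i * Real.log (lam i) - lam i) + ∑ j, w i j * μ' j := by
          rw [hrow i, mul_one]
  calc ∑ i, ∑ j, lam i * ν j * w i j
      ≤ ∑ i, ((lam i * Real.log (lam i) - lam i) + ∑ j, w i j * μ' j) :=
        Finset.sum_le_sum fun i _ => hstep i
    _ = (∑ i, lam i * Real.log (lam i)) - (∑ i, lam i) + ∑ i, ∑ j, w i j * μ' j := by
        rw [Finset.sum_add_distrib, Finset.sum_sub_distrib]
    _ = (∑ i, lam i * Real.log (lam i)) - 1 + ∑ j, (∑ i, w i j) * μ' j := by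
        rw [hlamsum, Finset.sum_comm]
        congr 1
        exact Finset.sum_congr rfl fun j _ => (Finset.sum_mul _ _ _).symm
    _ = ∑ i, lam i * Real.log (lam i) := by
        have : ∑ j, (∑ i, w i j) * μ' j = ∑ j, μ' j := by
          refine Finset.sum_congr rfl fun j _ => ?_
          rw [hcol j, one_mul]
        rw [this, hsum']
        ring

lemma sandwich_mul_trace_re {σ : Matrix (Fin d) (Fin d) ℂ} (hσh : σ.IsHermitian)
    (v : Fin d → ℝ) :
    ((σ * ((hσh.eigenvectorUnitary : Matrix (Fin d) (Fin d) ℂ)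
        * diagonal (fun j => (v j : ℂ))
        * (hσh.eigenvectorUnitary : Matrix (Fin d) (Fin d) ℂ)ᴴ)).trace).re
      = ∑ j, hσh.eigenvalues j * v j := by
  obtain ⟨hM, hM'⟩ := unitary_facts hσh
  set M := (hσh.eigenvectorUnitary : Matrix (Fin d) (Fin d) ℂ)
  conv_lhs => rw [spectral_form hσh]
  rw [sandwich_mul hM, trace_sandwich hM, Complex.re_sum]
  refine Finset.sum_congr rfl fun j _ => ?_
  rw [← Complex.ofReal_mul, Complex.ofReal_re]

set_option maxHeartbeats 2000000 in
lemma oneSided (hd : 5 ≤ d) (ρ σ : Matrix (Fin d) (Fin d) ℂ)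
    (hρ : ρ.PosSemidef) (hρ1 : ρ.trace = 1)
    (hσ : σ.PosSemidef) (hσ1 : σ.trace = 1)
    (ψ φ : EuclideanSpace ℂ (Fin d × Fin d))
    (hψ : IsPurification ρ ψ) (hφ : IsPurification σ φ)
    (hδpos : 0 < ‖ψ - φ‖) (hδle : ‖ψ - φ‖ ≤ 0.221) :
    vnEntropy ρ - vnEntropy σ ≤ 4.5 * Real.log d * ‖ψ - φ‖ := by
  have hd1 : 1 ≤ d := le_trans (by norm_num) hd
  have hdpos : (0:ℝ) < d := by positivity
  have hLd : (1.6:ℝ) ≤ Real.log d :=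
    le_trans EntLipScalar.log_five (Real.log_le_log (by norm_num) (by exact_mod_cast hd))
  set Ld := Real.log d with hLd0
  clear_value Ld
  set δ := ‖ψ - φ‖ with hδ0
  clear_value δ
  set ε := δ ^ 2 with hε0
  clear_value ε
  have hεpos : 0 < ε := by rw [hε0]; positivity
  have hεle : ε ≤ 0.048841 := by rw [hε0]; nlinarith
  obtain ⟨hM, hM'⟩ := unitary_facts hσ.1
  set M := (hσ.1.eigenvectorUnitary : Matrix (Fin d) (Fin d) ℂ) with hM0
  set μ := hσ.1.eigenvalues with hμ0'
  have hμ0 : ∀ i, 0 ≤ μ i := hσ.eigenvalues_nonneg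
  have hμs : ∑ i, μ i = 1 := eigenvalues_sum_one hσ.1 hσ1
  have hμ1 : ∀ i, μ i ≤ 1 := by
    intro i
    have h := Finset.single_le_sum (f := μ) (fun j _ => hμ0 j) (Finset.mem_univ i)
    rw [hμs] at h
    exact h
  set μ' := fun j => (1 - ε) * μ j + ε / d with hμ'0
  have hεd : 0 < ε / d := div_pos hεpos hdpos
  have hμ'pos : ∀ j, 0 < μ' j := by
    intro j
    have := hμ0 j
    simp only [hμ'0]
    nlinarith
  have hμ'sum : ∑ j, μ' j = 1 := by
    simp only [hμ'0]
    rw [Finset.sum_add_distrib, ← Finset.mul_sum, hμs, Finset.sum_const, Finset.card_univ,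
      Fintype.card_fin, nsmul_eq_mul]
    field_simp
    ring
  have hμ'le1 : ∀ j, μ' j ≤ 1 := by
    intro j
    have h1 : ε / (d:ℝ) ≤ ε := by
      apply div_le_self hεpos.le
      exact_mod_cast hd1
    simp only [hμ'0]
    nlinarith [hμ1 j, hμ0 j]
  set ν := fun j => Real.log (μ' j) with hν0
  set L := M * diagonal (fun j => (ν j : ℂ)) * Mᴴ with hL0
  have hLH : Lᴴ = L := sandwich_conjTranspose M ν
  -- partial traces
  have hptψ : partialTrace ψ = ρ := by
    ext i j
    exact (hψ.2 i j).symm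
  have hptφ : partialTrace φ = σ := by
    ext i j
    exact (hφ.2 i j).symm
  -- Klein bound
  have hKlein : vnEntropy ρ ≤ -((ρ * L).trace).re :=
    klein_bound hρ hρ1 hM hM' hμ'pos hμ'sum
  -- ε'
  set ε' := -Real.log (1 - ε) with hε'0
  clear_value ε'
  have hε'le : ε' ≤ 1.052 * ε := by
    rw [hε'0]
    exact EntLipScalar.neg_log_one_sub hεpos (by linarith)
  have hε'nonneg : 0 ≤ ε' := by
    rw [hε'0, neg_nonneg]
    exact Real.log_nonpos (by nlinarith) (by nlinarith)
  -- trace formulas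
  have htrσL : ((σ * L).trace).re = ∑ j, μ j * ν j := sandwich_mul_trace_re hσ.1 ν
  have hνlow : ∀ j, 0 < μ j → Real.log (μ j) - ε' ≤ ν j := by
    intro j hμj
    have h1 : (1 - ε) * μ j ≤ μ' j := by
      simp only [hμ'0]
      nlinarith
    have hc : (0:ℝ) < (1 - ε) * μ j := mul_pos (by linarith) hμj
    have h2 : Real.log ((1 - ε) * μ j) ≤ ν j := Real.log_le_log hc h1
    rw [Real.log_mul (by linarith) (ne_of_gt hμj)] at h2
    rw [hε'0]
    linarith
  have hνnonpos : ∀ j, ν j ≤ 0 := fun j => Real.log_nonpos (hμ'pos j).le (hμ'le1 j)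
  -- entropy of σ lower bound
  have hSσ : -((σ * L).trace).re - ε' ≤ vnEntropy σ := by
    rw [entropy_eq hσ.1, htrσL]
    have hterm : ∀ j, μ j * Real.log (μ j) ≤ μ j * ν j + ε' * μ j := by
      intro j
      rcases eq_or_lt_of_le (hμ0 j) with h | h
      · rw [← h]; simp
      · have := hνlow j h
        nlinarith
    have hsum : ∑ j, μ j * Real.log (μ j) ≤ ∑ j, (μ j * ν j + ε' * μ j) :=
      Finset.sum_le_sum fun j _ => hterm j
    rw [Finset.sum_add_distrib, ← Finset.mul_sum, hμs] at hsum
    linarith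
  -- norm of L φ
  have hnormφsq : ‖matAct L φ‖ ^ 2 = ∑ j, μ j * (ν j * ν j) := by
    rw [norm_matAct_sq, hptφ, hLH]
    have hLL : L * L = M * diagonal (fun j => ((ν j * ν j : ℝ) : ℂ)) * Mᴴ := by
      rw [hL0, sandwich_mul hM]
      congr 1
      congr 1
      funext j
      push_cast
      ring
    rw [hLL]
    exact sandwich_mul_trace_re hσ.1 (fun j => ν j * ν j)
  -- second moment bound
  have hV : ∑ i, μ i * Real.log (μ i) ^ 2 ≤ 2.84 * Ld ^ 2 := by
    rw [hLd0]
    exact EntLipScalar.V_bound hd μ hμ0 hμ1 hμs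
  have hH1 : -∑ i, μ i * Real.log (μ i) ≤ Ld := by
    rw [hLd0]
    exact EntLipScalar.H_le_log hd1 μ hμ0 hμs
  have hH0 : 0 ≤ -∑ i, μ i * Real.log (μ i) := EntLipScalar.H_nonneg μ hμ0 hμ1
  have hV' : ∑ j, μ j * (ν j * ν j)
      ≤ (∑ i, μ i * Real.log (μ i) ^ 2) + 2 * ε' * (-∑ i, μ i * Real.log (μ i)) + ε' ^ 2 := by
    have hterm : ∀ j, μ j * (ν j * ν j)
        ≤ μ j * Real.log (μ j) ^ 2 + 2 * ε' * (-(μ j * Real.log (μ j))) + ε' ^ 2 * μ j := by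
      intro j
      rcases eq_or_lt_of_le (hμ0 j) with h | h
      · rw [← h]
        simp
      · have h1 := hνlow j h
        have h2 := hνnonpos j
        have h3 : Real.log (μ j) ≤ 0 := Real.log_nonpos (hμ0 j) (hμ1 j)
        have h4 : ν j * ν j ≤ (Real.log (μ j) - ε') ^ 2 := by nlinarith
        nlinarith [sq_nonneg (Real.log (μ j) - ε')]
    calc ∑ j, μ j * (ν j * ν j)
        ≤ ∑ j, (μ j * Real.log (μ j) ^ 2 + 2 * ε' * (-(μ j * Real.log (μ j))) + ε' ^ 2 * μ j) :=
          Finset.sum_le_sum fun j _ => hterm j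
      _ = (∑ i, μ i * Real.log (μ i) ^ 2) + 2 * ε' * (-∑ i, μ i * Real.log (μ i))
            + ε' ^ 2 * (∑ i, μ i) := by
          rw [Finset.sum_add_distrib, Finset.sum_add_distrib, ← Finset.mul_sum, ← Finset.mul_sum]
          rw [← Finset.sum_neg_distrib]
          try ring_nf
      _ = (∑ i, μ i * Real.log (μ i) ^ 2) + 2 * ε' * (-∑ i, μ i * Real.log (μ i)) + ε' ^ 2 := by
          rw [hμs]; ring
  have hε'small : ε' ≤ 0.05139 := by nlinarith
  have hWbound : ‖matAct L φ‖ ≤ 1.705 * Ld := by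
    have h1 : ‖matAct L φ‖ ^ 2 ≤ (1.705 * Ld) ^ 2 := by
      rw [hnormφsq]
      have h2 : ∑ j, μ j * (ν j * ν j) ≤ 2.84 * Ld ^ 2 + 2 * ε' * Ld + ε' ^ 2 := by
        have := mul_le_mul_of_nonneg_left hH1 (by linarith : (0:ℝ) ≤ 2 * ε')
        linarith
      have hLdnn : (0:ℝ) ≤ Ld := by linarith
      nlinarith [h2, mul_le_mul_of_nonneg_right hε'small hLdnn,
        mul_le_mul_of_nonneg_right hLd hLdnn, hε'nonneg, hε'small, sq_nonneg ε']
    calc ‖matAct L φ‖ = Real.sqrt (‖matAct L φ‖ ^ 2) := (Real.sqrt_sq (norm_nonneg _)).symm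
      _ ≤ Real.sqrt ((1.705 * Ld) ^ 2) := Real.sqrt_le_sqrt h1
      _ = 1.705 * Ld := Real.sqrt_sq (by nlinarith)
  set W := ‖matAct L φ‖ with hW0'
  clear_value W
  -- operator norm bound of L
  set B := Ld - Real.log ε with hB0'
  clear_value B
  have hlogεneg : Real.log ε < 0 := Real.log_neg hεpos (by linarith)
  have hBpos : 0 < B := by
    rw [hB0']
    linarith
  have hνabs : ∀ j, |ν j| ≤ B := by
    intro j
    have h1 : ε / d ≤ μ' j := by
      simp only [hμ'0]
      nlinarith [hμ0 j]
    have h2 : Real.log (ε / d) ≤ ν j := Real.log_le_log hεd h1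
    rw [Real.log_div (ne_of_gt hεpos) (ne_of_gt hdpos)] at h2
    rw [abs_le]
    constructor
    · rw [hB0', hLd0]
      linarith
    · have := hνnonpos j
      linarith [hBpos.le]
  have hopnorm : ∀ χ : EuclideanSpace ℂ (Fin d × Fin d), ‖matAct L χ‖ ≤ B * ‖χ‖ :=
    fun χ => norm_matAct_le hM hM' ν hBpos.le hνabs χ
  -- ‖L ψ‖ bound
  have hLψ : ‖matAct L ψ‖ ≤ W + B * δ := by
    have h1 : matAct L ψ = matAct L φ + matAct L (ψ - φ) := by
      rw [matAct_sub]
      abel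
    rw [h1]
    calc ‖matAct L φ + matAct L (ψ - φ)‖ ≤ ‖matAct L φ‖ + ‖matAct L (ψ - φ)‖ := norm_add_le _ _
      _ ≤ W + B * δ := by
          have hx := hopnorm (ψ - φ)
          rw [← hδ0] at hx
          rw [hW0']
          linarith
  -- inner-product difference bound
  have htrρL : (ρ * L).trace = (inner ℂ ψ (matAct L ψ) : ℂ) := by
    rw [inner_matAct_pt, hptψ]
  have htrσL2 : (σ * L).trace = (inner ℂ φ (matAct L φ) : ℂ) := by
    rw [inner_matAct_pt, hptφ]
  have hdiff : ((σ * L).trace).re - ((ρ * L).trace).re ≤ 2 * W * δ + B * δ ^ 2 := by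
    have e1 : (inner ℂ (φ - ψ) (matAct L φ) : ℂ)
        = inner ℂ φ (matAct L φ) - inner ℂ ψ (matAct L φ) := inner_sub_left _ _ _
    have e2 : (inner ℂ (matAct L ψ) (φ - ψ) : ℂ)
        = inner ℂ ψ (matAct L φ) - inner ℂ ψ (matAct L ψ) := by
      rw [matAct_adjoint, hLH, matAct_sub, inner_sub_right]
    have e3 : ((σ * L).trace) - ((ρ * L).trace)
        = (inner ℂ (φ - ψ) (matAct L φ) : ℂ) + inner ℂ (matAct L ψ) (φ - ψ) := by
      rw [htrρL, htrσL2, e1, e2]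
      ring
    have e4 : ((σ * L).trace).re - ((ρ * L).trace).re
        = ((inner ℂ (φ - ψ) (matAct L φ) : ℂ)).re + ((inner ℂ (matAct L ψ) (φ - ψ) : ℂ)).re := by
      have := congrArg Complex.re e3
      rw [Complex.sub_re, Complex.add_re] at this
      linarith [this]
    have b1 : ((inner ℂ (φ - ψ) (matAct L φ) : ℂ)).re ≤ δ * W := by
      have h := re_inner_le_norm (𝕜 := ℂ) (φ - ψ) (matAct L φ)
      rw [norm_sub_rev] at h
      rw [hW0', hδ0]
      exact h
    have b2 : ((inner ℂ (matAct L ψ) (φ - ψ) : ℂ)).re ≤ (W + B * δ) * δ := by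
      have h := re_inner_le_norm (𝕜 := ℂ) (matAct L ψ) (φ - ψ)
      have h2 : ‖φ - ψ‖ = δ := by rw [norm_sub_rev]; exact hδ0.symm
      rw [h2] at h
      calc ((inner ℂ (matAct L ψ) (φ - ψ) : ℂ)).re ≤ ‖matAct L ψ‖ * δ := h
        _ ≤ (W + B * δ) * δ := by
            apply mul_le_mul_of_nonneg_right hLψ hδpos.le
    rw [e4]
    nlinarith [b1, b2]
  -- log ε = 2 log δ
  have hlogε : Real.log ε = 2 * Real.log δ := by
    rw [hε0, Real.log_pow]
    push_cast
    ring
  have hxlog : δ * (-Real.log δ) ≤ 0.3355 := EntLipScalar.xlog_small hδpos hδle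
  -- final assembly
  have hfinal : vnEntropy ρ - vnEntropy σ ≤ 2 * W * δ + B * δ ^ 2 + ε' := by
    linarith [hKlein, hSσ, hdiff]
  have hBδ : B * δ ^ 2 ≤ Ld * δ ^ 2 + 2 * δ * 0.3355 := by
    rw [hB0', hlogε]
    have h : δ ^ 2 * (-2 * Real.log δ) = 2 * δ * (δ * (-Real.log δ)) := by ring
    nlinarith [mul_le_mul_of_nonneg_left hxlog (by linarith : (0:ℝ) ≤ 2 * δ)]
  have hW0le : 0 ≤ W := by rw [hW0']; exact norm_nonneg _
  have hLdnn : (0:ℝ) ≤ Ld := by linarith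
  have h2Wδ : 2 * W * δ ≤ 2 * (1.705 * Ld) * δ := by
    nlinarith [mul_le_mul_of_nonneg_right hWbound hδpos.le]
  have hLdδ2 : Ld * δ ^ 2 ≤ 0.221 * Ld * δ := by
    nlinarith [mul_le_mul_of_nonneg_left hδle (mul_nonneg hLdnn hδpos.le)]
  have hεδ : ε ≤ 0.221 * δ := by
    rw [hε0]
    nlinarith [mul_le_mul_of_nonneg_right hδle hδpos.le]
  have hε'δ : ε' ≤ 1.052 * (0.221 * δ) := by nlinarith [hε'le, hεδ, hεpos]
  have hrest : 2 * δ * 0.3355 + 1.052 * (0.221 * δ) ≤ 0.5647 * Ld * δ := by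
    nlinarith [mul_le_mul_of_nonneg_right (show (0.903492:ℝ) ≤ 0.5647 * Ld by linarith) hδpos.le]
  nlinarith [hfinal, hBδ, h2Wδ, hLdδ2, hε'δ, hrest]

lemma entropy_range {A : Matrix (Fin d) (Fin d) ℂ} (hd1 : 1 ≤ d) (hA : A.PosSemidef)
    (hA1 : A.trace = 1) : 0 ≤ vnEntropy A ∧ vnEntropy A ≤ Real.log d := by
  have h0 : ∀ i, 0 ≤ hA.1.eigenvalues i := hA.eigenvalues_nonneg
  have hs : ∑ i, hA.1.eigenvalues i = 1 := eigenvalues_sum_one hA.1 hA1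
  have h1 : ∀ i, hA.1.eigenvalues i ≤ 1 := by
    intro i
    have h := Finset.single_le_sum (f := hA.1.eigenvalues) (fun j _ => h0 j) (Finset.mem_univ i)
    rw [hs] at h
    exact h
  rw [entropy_eq hA.1]
  exact ⟨EntLipScalar.H_nonneg _ h0 h1, EntLipScalar.H_le_log hd1 _ h0 hs⟩

end EntLip

/-- For `d ≥ 5` and purifications `ψ, φ` of `ρ, σ`,
`|S(ρ) − S(σ)| ≤ (π ln d / ln 2) ‖ψ − φ‖₂`. -/
theorem entropy_lipschitz_purification {d : ℕ} (hd : 5 ≤ d)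
    (ρ σ : Matrix (Fin d) (Fin d) ℂ)
    (hρ : ρ.PosSemidef) (hρ1 : ρ.trace = 1)
    (hσ : σ.PosSemidef) (hσ1 : σ.trace = 1)
    (ψ φ : EuclideanSpace ℂ (Fin d × Fin d))
    (hψ : IsPurification ρ ψ) (hφ : IsPurification σ φ) :
    |vnEntropy ρ - vnEntropy σ| ≤ Real.pi * Real.log d / Real.log 2 * ‖ψ - φ‖ := by
  have hd1 : 1 ≤ d := le_trans (by norm_num) hd
  have hLd16 : (1.6:ℝ) ≤ Real.log d :=
    le_trans EntLipScalar.log_five (Real.log_le_log (by norm_num) (by exact_mod_cast hd))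
  have hLdnn : (0:ℝ) ≤ Real.log d := by linarith
  have hl2u := Real.log_two_lt_d9
  have hl2l := Real.log_two_gt_d9
  have hpi := Real.pi_gt_d6
  have hl2pos : (0:ℝ) < Real.log 2 := by norm_num at hl2l ⊢; linarith
  have hC : (4.5:ℝ) * Real.log d ≤ Real.pi * Real.log d / Real.log 2 := by
    rw [le_div_iff₀ hl2pos]
    nlinarith [mul_le_mul_of_nonneg_right (show (4.5:ℝ) * Real.log 2 ≤ 3.1191623136 by linarith)
        hLdnn,
      mul_le_mul_of_nonneg_right (show (3.141592:ℝ) ≤ Real.pi by linarith) hLdnn]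
  obtain ⟨hρ0, hρln⟩ := EntLip.entropy_range hd1 hρ hρ1
  obtain ⟨hσ0, hσln⟩ := EntLip.entropy_range hd1 hσ hσ1
  set δ := ‖ψ - φ‖ with hδ0
  have hδnn : 0 ≤ δ := norm_nonneg _
  rcases eq_or_lt_of_le hδnn with hz | hδpos
  · have hψφ : ψ = φ := sub_eq_zero.mp (norm_eq_zero.mp hz.symm)
    have hρσ : ρ = σ := by
      ext i j
      rw [hψ.2 i j, hφ.2 i j, hψφ]
    rw [hρσ, sub_self, abs_zero, ← hz, mul_zero]
  · rcases le_or_gt δ 0.221 with hsmall | hbig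
    · have h1 := EntLip.oneSided hd ρ σ hρ hρ1 hσ hσ1 ψ φ hψ hφ hδpos hsmall
      have hsym1 : ‖φ - ψ‖ = δ := by rw [hδ0, norm_sub_rev]
      have h2 := EntLip.oneSided hd σ ρ hσ hσ1 hρ hρ1 φ ψ hφ hψ
        (by rw [hsym1]; exact hδpos) (by rw [hsym1]; exact hsmall)
      rw [hsym1] at h2
      have hb : 4.5 * Real.log d * δ ≤ Real.pi * Real.log d / Real.log 2 * δ :=
        mul_le_mul_of_nonneg_right hC hδnn
      rw [abs_sub_le_iff]
      exact ⟨le_trans h1 hb, le_trans h2 hb⟩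
    · have hmain : |vnEntropy ρ - vnEntropy σ| ≤ Real.log d := by
        rw [abs_sub_le_iff]
        constructor <;> linarith
      have h1 : (1:ℝ) ≤ Real.pi / Real.log 2 * δ := by
        rw [div_mul_eq_mul_div, le_div_iff₀ hl2pos]
        nlinarith [mul_le_mul_of_nonneg_left hbig.le (show (0:ℝ) ≤ Real.pi by linarith)]
      calc |vnEntropy ρ - vnEntropy σ| ≤ Real.log d := hmain
        _ = Real.log d * 1 := by ring
        _ ≤ Real.log d * (Real.pi / Real.log 2 * δ) := by
            exact mul_le_mul_of_nonneg_left h1 hLdnn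
        _ = Real.pi * Real.log d / Real.log 2 * δ := by ring
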